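/- Let 𝓜 be a quadratic module in M_n(ℝ[X]). Then for every symmetric matrix A ∈ S_n(ℝ[X]) and every real number r > 0: r²·I_n − A² ∈ 𝓜 if and only if both r·I_n + A ∈ 𝓜 and r·I_n − A ∈ 𝓜. -/

import Mathlib

open Matrix
noncomputable section

/-- The polynomial ring `ℝ[x_1, …, x_d]`. -/
abbrev RX (d : ℕ) : Type := MvPolynomial (Fin d) ℝ

/-- The basic closed semialgebraic set `K_G` attached to a set `G` of polynomials. -/
def KsetP {d : ℕ} (G : Set (RX d)) : Set (Fin d → ℝ) :=
  {x | ∀ g ∈ G, 0 ≤ MvPolynomial.eval x g}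

/-- Evaluation of a polynomial matrix at a point of `ℝ^d`. -/
def evalMat {d n : ℕ} (x : Fin d → ℝ) (A : Matrix (Fin n) (Fin n) (RX d)) :
    Matrix (Fin n) (Fin n) ℝ :=
  A.map (MvPolynomial.eval x)

/-- The set `K_𝒢` attached to a set `𝒢` of symmetric polynomial matrices. -/
def KsetM {d n : ℕ} (𝒢 : Set (Matrix (Fin n) (Fin n) (RX d))) : Set (Fin d → ℝ) :=
  {x | ∀ A ∈ 𝒢, (evalMat x A).PosSemidef}

/-- Membership in the preordering of a commutative ring generated by a subset `G`:
the smallest subset containing `G` and all squares and closed under addition and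
multiplication.  For `G = {g_1, …, g_m}` this is exactly the set of all finite sums
`Σ_{e ∈ {0,1}^m} σ_e g_1^{e_1} ⋯ g_m^{e_m}` with each `σ_e` a sum of squares. -/
inductive IsInPreordering {R : Type} [CommRing R] (G : Set R) : R → Prop
  | sq (a : R) : IsInPreordering G (a ^ 2)
  | gen {g : R} : g ∈ G → IsInPreordering G g
  | add {a b : R} : IsInPreordering G a → IsInPreordering G b → IsInPreordering G (a + b)
  | mul {a b : R} : IsInPreordering G a → IsInPreordering G b → IsInPreordering G (a * b)

/-- Membership in the quadratic module of a commutative ring generated by a subset `G`: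
for `G = {g_1, …, g_m}` this is exactly the set of all sums
`σ_0 + σ_1 g_1 + ⋯ + σ_m g_m` with each `σ_i` a sum of squares. -/
inductive IsInQuadModuleGen {R : Type} [CommRing R] (G : Set R) : R → Prop
  | one : IsInQuadModuleGen G 1
  | gen {g : R} : g ∈ G → IsInQuadModuleGen G g
  | add {a b : R} : IsInQuadModuleGen G a → IsInQuadModuleGen G b → IsInQuadModuleGen G (a + b)
  | mul_sq (f : R) {a : R} : IsInQuadModuleGen G a → IsInQuadModuleGen G (f ^ 2 * a)

/-- For a quadratic module `M ⊆ R`, the quadratic module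
`M^n = {Σ_i m_i A_iᵀ A_i : m_i ∈ M, A_i ∈ M_n(R)}` of `n × n` matrices. -/
def MatQM {R : Type} [CommRing R] (n : ℕ) (M : Set R) : Set (Matrix (Fin n) (Fin n) R) :=
  {B | ∃ (k : ℕ) (m : Fin k → R) (A : Fin k → Matrix (Fin n) (Fin n) R),
    (∀ i, m i ∈ M) ∧ B = ∑ i, m i • ((A i)ᵀ * A i)}

/-- A quadratic module in `M_n(R)`: a subset of the symmetric matrices containing `I_n`,
closed under addition and under congruence `B ↦ Aᵀ B A`. -/
def IsMatQuadModule {R : Type} [CommRing R] {n : ℕ}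
    (𝓜 : Set (Matrix (Fin n) (Fin n) R)) : Prop :=
  (∀ B ∈ 𝓜, B.IsSymm) ∧ (1 : Matrix (Fin n) (Fin n) R) ∈ 𝓜 ∧
    (∀ A ∈ 𝓜, ∀ B ∈ 𝓜, A + B ∈ 𝓜) ∧
    (∀ (A : Matrix (Fin n) (Fin n) R), ∀ B ∈ 𝓜, Aᵀ * B * A ∈ 𝓜)

/-- Membership in the quadratic module `𝓜_𝒢` of `M_n(R)` generated by a set `𝒢` of
symmetric matrices. -/
inductive InMatQM {R : Type} [CommRing R] {n : ℕ}
    (𝒢 : Set (Matrix (Fin n) (Fin n) R)) : Matrix (Fin n) (Fin n) R → Prop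
  | one : InMatQM 𝒢 1
  | gen {B : Matrix (Fin n) (Fin n) R} : B ∈ 𝒢 → InMatQM 𝒢 B
  | add {A B : Matrix (Fin n) (Fin n) R} : InMatQM 𝒢 A → InMatQM 𝒢 B → InMatQM 𝒢 (A + B)
  | conj (A : Matrix (Fin n) (Fin n) R) {B : Matrix (Fin n) (Fin n) R} :
      InMatQM 𝒢 B → InMatQM 𝒢 (Aᵀ * B * A)

/-- Membership in the preordering `𝒯_𝒢` of `M_n(R)` generated by a set `𝒢` of symmetric
matrices: the smallest quadratic module of `M_n(R)` containing `𝒢` whose intersection with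
`R · I_n` is closed under multiplication. -/
inductive InMatPre {R : Type} [CommRing R] {n : ℕ}
    (𝒢 : Set (Matrix (Fin n) (Fin n) R)) : Matrix (Fin n) (Fin n) R → Prop
  | one : InMatPre 𝒢 1
  | gen {B : Matrix (Fin n) (Fin n) R} : B ∈ 𝒢 → InMatPre 𝒢 B
  | add {A B : Matrix (Fin n) (Fin n) R} : InMatPre 𝒢 A → InMatPre 𝒢 B → InMatPre 𝒢 (A + B)
  | conj (A : Matrix (Fin n) (Fin n) R) {B : Matrix (Fin n) (Fin n) R} :
      InMatPre 𝒢 B → InMatPre 𝒢 (Aᵀ * B * A)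
  | smul_mul {p q : R} : InMatPre 𝒢 (p • (1 : Matrix (Fin n) (Fin n) R)) →
      InMatPre 𝒢 (q • (1 : Matrix (Fin n) (Fin n) R)) →
      InMatPre 𝒢 ((p * q) • (1 : Matrix (Fin n) (Fin n) R))

/-- A quadratic module `𝓜` of `M_n(R)` is Archimedean if for every `A ∈ M_n(R)` there is
`k ∈ ℕ` with `k·I_n − Aᵀ A ∈ 𝓜`. -/
def MatArch {R : Type} [CommRing R] {n : ℕ} (𝓜 : Set (Matrix (Fin n) (Fin n) R)) : Prop :=
  ∀ A : Matrix (Fin n) (Fin n) R, ∃ k : ℕ,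
    (k : R) • (1 : Matrix (Fin n) (Fin n) R) - Aᵀ * A ∈ 𝓜

/-- A quadratic module `M` of `R` (`1 ∈ M`, `M + M ⊆ M`, `f² M ⊆ M`). -/
def IsQuadModule {R : Type} [CommRing R] (M : Set R) : Prop :=
  (1 : R) ∈ M ∧ (∀ a ∈ M, ∀ b ∈ M, a + b ∈ M) ∧ ∀ (f : R), ∀ a ∈ M, f ^ 2 * a ∈ M

/-- A quadratic module `M` of `R` is Archimedean if for every `f ∈ R` there is `k ∈ ℕ`
with `k − f² ∈ M`. -/
def ScalarArch {R : Type} [CommRing R] (M : Set R) : Prop :=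
  ∀ f : R, ∃ k : ℕ, (k : R) - f ^ 2 ∈ M

/-- The set `R_∞(f, S)` of asymptotic values of `f` on `S`. -/
def AsympVals {d : ℕ} (f : RX d) (S : Set (Fin d → ℝ)) : Set ℝ :=
  {y | ∃ u : ℕ → (Fin d → ℝ), (∀ k, u k ∈ S) ∧
    Filter.Tendsto (fun k => ‖u k‖) Filter.atTop Filter.atTop ∧
    Filter.Tendsto (fun k => MvPolynomial.eval (u k) f) Filter.atTop (nhds y)}

/-- The scalar polynomial `xᵀ F x` attached to a vector `x ∈ ℝ^n` and a polynomial
matrix `F`. -/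
def quadForm {d n : ℕ} (v : Fin n → ℝ) (F : Matrix (Fin n) (Fin n) (RX d)) : RX d :=
  ∑ i, ∑ j, MvPolynomial.C (v i * v j) * F i j

/-- The canonical map from `ℝ[x_1, …, x_d]` to the completion
`ℝ[[x_1 − p_1, …, x_d − p_d]]` at a point `p`, i.e. Taylor expansion at `p`,
sending `x_i` to `p_i + X_i`. -/
def toCompletion {d : ℕ} (p : Fin d → ℝ) (f : RX d) : MvPowerSeries (Fin d) ℝ :=
  MvPolynomial.eval₂ ((MvPowerSeries.C : ℝ →+* MvPowerSeries (Fin d) ℝ))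
    (fun i => (MvPowerSeries.C : ℝ →+* MvPowerSeries (Fin d) ℝ) (p i) + MvPowerSeries.X i) f

/-- The Hessian matrix `D²f(p)` of a polynomial `f` at a point `p`. -/
def Hess {d : ℕ} (f : RX d) (p : Fin d → ℝ) : Matrix (Fin d) (Fin d) ℝ :=
  Matrix.of fun i j => MvPolynomial.eval p (MvPolynomial.pderiv i (MvPolynomial.pderiv j f))

/-- `t_1, …, t_d` is a system of uniformizing parameters at `p`: each `t_i` vanishes
at `p` and their differentials at `p` are linearly independent. -/
def IsUniformizing {d : ℕ} (p : Fin d → ℝ) (t : Fin d → RX d) : Prop :=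
  (∀ i, MvPolynomial.eval p (t i) = 0) ∧
    (Matrix.of fun i j => MvPolynomial.eval p (MvPolynomial.pderiv j (t i))).det ≠ 0

/-- `f` satisfies the boundary Hessian conditions at `p` with respect to
`t_1, …, t_k`, part of a system of uniformizing parameters `t_1, …, t_d` at `p`:
in the completion at `p`, `f = f_0 + f_1 + f_2 + ⋯` with `f_j` homogeneous of degree
`j` in `t_1, …, t_d`, `f_1 = a_1 t_1 + ⋯ + a_k t_k` with all `a_i > 0`, and the quadratic
form `f_2(0, …, 0, t_{k+1}, …, t_d)` is positive definite. -/
def SatisfiesBHC {d : ℕ} (p : Fin d → ℝ) (t : Fin d → RX d) (k : ℕ) (f : RX d) : Prop :=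
  ∃ (a : Fin d → ℝ) (c : Matrix (Fin d) (Fin d) ℝ),
    (∀ i : Fin d, (i : ℕ) < k → 0 < a i) ∧ (∀ i : Fin d, k ≤ (i : ℕ) → a i = 0) ∧
    (∀ v : Fin d → ℝ, v ≠ 0 → (∀ i : Fin d, (i : ℕ) < k → v i = 0) →
      0 < ∑ i, ∑ j, c i j * v i * v j) ∧
    toCompletion p (f - MvPolynomial.C (MvPolynomial.eval p f)
        - ∑ i, MvPolynomial.C (a i) * t i
        - ∑ i, ∑ j, MvPolynomial.C (c i j) * (t i * t j))
      ∈ (Ideal.span (Set.range fun i => toCompletion p (t i))) ^ 3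
/-!
With `B₊ = r·I + A` and `B₋ = r·I − A`, which commute, one has
`B₊² + (r²·I − A²) = 2r·B₊` and `B₊ B₋ B₊ + B₋ B₊ B₋ = 2r·(r²·I − A²)`.
Squares and congruences of members lie in `𝓜`, and so does `X` once `2r·X` does, since
congruence by the scalar `(2r)^{-1/2}·I` undoes the factor `2r`.
-/

section Identities

variable {R : Type} [CommRing R] {n : ℕ}

theorem add_mul_self_add_sq_smul_one_sub_mul_self (c : R) (A : Matrix (Fin n) (Fin n) R) :
    (c • 1 + A) * (c • 1 + A) + (c ^ 2 • 1 - A * A) = (2 * c) • (c • 1 + A) := by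
  simp only [add_mul, mul_add, smul_mul_assoc, mul_smul_comm, one_mul, mul_one]
  module

theorem add_mul_sub_mul_add_add_sub_mul_add_mul_sub (c : R) (A : Matrix (Fin n) (Fin n) R) :
    (c • 1 + A) * (c • 1 - A) * (c • 1 + A) + (c • 1 - A) * (c • 1 + A) * (c • 1 - A) =
      (2 * c) • (c ^ 2 • 1 - A * A) := by
  simp only [add_mul, mul_add, sub_mul, mul_sub, smul_mul_assoc, mul_smul_comm, one_mul,
    mul_one, mul_assoc]
  module

end Identities

namespace IsMatQuadModule

variable {R : Type} [CommRing R] {n : ℕ} {𝓜 : Set (Matrix (Fin n) (Fin n) R)}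

theorem mul_mul_mem (h𝓜 : IsMatQuadModule 𝓜) {B X : Matrix (Fin n) (Fin n) R} (hB : B.IsSymm)
    (hX : X ∈ 𝓜) : B * X * B ∈ 𝓜 := by
  simpa [hB.eq] using h𝓜.2.2.2 B X hX

theorem mul_self_mem (h𝓜 : IsMatQuadModule 𝓜) {B : Matrix (Fin n) (Fin n) R} (hB : B.IsSymm) :
    B * B ∈ 𝓜 := by
  simpa using h𝓜.mul_mul_mem hB h𝓜.2.1

theorem mem_of_smul_mem (h𝓜 : IsMatQuadModule 𝓜) {s u : R} (hsu : s ^ 2 * u = 1)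
    {B : Matrix (Fin n) (Fin n) R} (hB : u • B ∈ 𝓜) : B ∈ 𝓜 := by
  have hsus : s * (u * s) = 1 := by linear_combination hsu
  simpa [smul_smul, hsus] using h𝓜.2.2.2 (s • 1) _ hB

theorem smul_one_add_mem_of_sq_smul_one_sub_mul_self_mem (h𝓜 : IsMatQuadModule 𝓜) {c s : R}
    (hs : s ^ 2 * (2 * c) = 1) {A : Matrix (Fin n) (Fin n) R} (hA : A.IsSymm)
    (hD : c ^ 2 • 1 - A * A ∈ 𝓜) : c • 1 + A ∈ 𝓜 := by
  refine h𝓜.mem_of_smul_mem hs ?_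
  rw [← add_mul_self_add_sq_smul_one_sub_mul_self]
  exact h𝓜.2.2.1 _ (h𝓜.mul_self_mem ((isSymm_one.smul c).add hA)) _ hD

theorem sq_smul_one_sub_mul_self_mem_iff (h𝓜 : IsMatQuadModule 𝓜) {c s : R}
    (hs : s ^ 2 * (2 * c) = 1) {A : Matrix (Fin n) (Fin n) R} (hA : A.IsSymm) :
    c ^ 2 • 1 - A * A ∈ 𝓜 ↔ c • 1 + A ∈ 𝓜 ∧ c • 1 - A ∈ 𝓜 := by
  constructor
  · intro hD
    refine ⟨h𝓜.smul_one_add_mem_of_sq_smul_one_sub_mul_self_mem hs hA hD, ?_⟩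
    rw [sub_eq_add_neg]
    refine h𝓜.smul_one_add_mem_of_sq_smul_one_sub_mul_self_mem hs hA.neg ?_
    rwa [neg_mul_neg]
  · rintro ⟨hplus, hminus⟩
    refine h𝓜.mem_of_smul_mem hs ?_
    rw [← add_mul_sub_mul_add_add_sub_mul_add_mul_sub]
    exact h𝓜.2.2.1 _ (h𝓜.mul_mul_mem ((isSymm_one.smul c).add hA) hminus)
      _ (h𝓜.mul_mul_mem ((isSymm_one.smul c).sub hA) hplus)

end IsMatQuadModule

theorem stmt_9_general {d n : ℕ} (𝓜 : Set (Matrix (Fin n) (Fin n) (RX d)))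
    (h𝓜 : IsMatQuadModule 𝓜)
    (A : Matrix (Fin n) (Fin n) (RX d)) (hA : A.IsSymm) (r : ℝ) (hr : 0 < r) :
    ((MvPolynomial.C (r ^ 2) : RX d) • (1 : Matrix (Fin n) (Fin n) (RX d)) - A * A ∈ 𝓜) ↔
      ((MvPolynomial.C r : RX d) • (1 : Matrix (Fin n) (Fin n) (RX d)) + A ∈ 𝓜 ∧
       (MvPolynomial.C r : RX d) • (1 : Matrix (Fin n) (Fin n) (RX d)) - A ∈ 𝓜) := by
  have hs : (MvPolynomial.C (Real.sqrt (2 * r))⁻¹ : RX d) ^ 2 * (2 * MvPolynomial.C r) = 1 := by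
    rw [← map_pow, ← map_ofNat MvPolynomial.C 2, ← map_mul, ← map_mul, inv_pow,
      Real.sq_sqrt (by positivity), inv_mul_cancel₀ (by positivity), map_one]
  rw [map_pow]
  exact h𝓜.sq_smul_one_sub_mul_self_mem_iff hs hA

/-- For a quadratic module `𝓜` in `M_n(ℝ[X])`, a symmetric `A` and `r > 0`:
`r²·I_n − A² ∈ 𝓜` iff `r·I_n + A ∈ 𝓜` and `r·I_n − A ∈ 𝓜`. -/
theorem stmt_9 {d n : ℕ} (hn : 0 < n) (𝓜 : Set (Matrix (Fin n) (Fin n) (RX d)))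
    (h𝓜 : IsMatQuadModule 𝓜)
    (A : Matrix (Fin n) (Fin n) (RX d)) (hA : A.IsSymm) (r : ℝ) (hr : 0 < r) :
    ((MvPolynomial.C (r ^ 2) : RX d) • (1 : Matrix (Fin n) (Fin n) (RX d)) - A * A ∈ 𝓜) ↔
      ((MvPolynomial.C r : RX d) • (1 : Matrix (Fin n) (Fin n) (RX d)) + A ∈ 𝓜 ∧
       (MvPolynomial.C r : RX d) • (1 : Matrix (Fin n) (Fin n) (RX d)) - A ∈ 𝓜) :=
  stmt_9_general 𝓜 h𝓜 A hA r hr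

end
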